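/- arXiv:math/9807148 — 5 statements merged into one kernel-verified Lean document; each statement's English description precedes it below -/
import Mathlib

section
/- Let n ≥ 1 and b ≥ 1 be integers and let λ > 0 be real. Define the cubic polynomial p(X) = X³ − 2n·X² − λ(2b + 9λ + 2n)·X + 12n·λ², and set c := (b + n + √((b+n)² + 24n²))/(2n). Then p(−cλ) < 0, p(−3λ) = 6bλ² > 0, p(0) = 12nλ² > 0, and p has exactly one negative real root μ₀, which satisfies −cλ < μ₀ < −3λ; every other real root of p is positive. -/
set_option maxHeartbeats 1000000 in
/-- Root localisation for the cubic `p(X) = X³ − 2n X² − λ(2b + 9λ + 2n) X + 12nλ²` coming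
from the Laplacian on 1-forms on the double Heisenberg group:  with
`c = (b + n + √((b+n)² + 24n²))/(2n)` one has `p(−cλ) < 0`, `p(−3λ) = 6bλ² > 0`,
`p(0) = 12nλ² > 0`, and `p` has exactly one negative real root `μ₀`, which satisfies
`−cλ < μ₀ < −3λ`; every other real root of `p` is positive. -/
theorem double_heisenberg_cubic_roots (n b : ℕ) (hn : 1 ≤ n) (hb : 1 ≤ b)
    (lam : ℝ) (hlam : 0 < lam)
    (p : ℝ → ℝ)
    (hp : ∀ x : ℝ, p x =
      x ^ 3 - 2 * n * x ^ 2 - lam * (2 * b + 9 * lam + 2 * n) * x + 12 * n * lam ^ 2)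
    (c : ℝ)
    (hc : c = ((b : ℝ) + n + Real.sqrt (((b : ℝ) + n) ^ 2 + 24 * (n : ℝ) ^ 2)) / (2 * n)) :
    p (-(c * lam)) < 0 ∧
    (p (-(3 * lam)) = 6 * b * lam ^ 2 ∧ 0 < p (-(3 * lam))) ∧
    (p 0 = 12 * n * lam ^ 2 ∧ 0 < p 0) ∧
    ∃ μ₀ : ℝ, μ₀ < 0 ∧ p μ₀ = 0 ∧
      (-(c * lam) < μ₀ ∧ μ₀ < -(3 * lam)) ∧
      (∀ x : ℝ, p x = 0 → x < 0 → x = μ₀) ∧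
      (∀ x : ℝ, p x = 0 → x ≠ μ₀ → 0 < x) := by
  have hn' : (1 : ℝ) ≤ (n : ℝ) := by exact_mod_cast hn
  have hb' : (1 : ℝ) ≤ (b : ℝ) := by exact_mod_cast hb
  have hn0 : (0 : ℝ) < (n : ℝ) := by linarith
  set s : ℝ := Real.sqrt (((b : ℝ) + n) ^ 2 + 24 * (n : ℝ) ^ 2) with hs
  have hs0 : 0 ≤ s := Real.sqrt_nonneg _
  have hssq : s ^ 2 = ((b : ℝ) + n) ^ 2 + 24 * (n : ℝ) ^ 2 := by
    rw [hs, Real.sq_sqrt]; positivity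
  have h2nc : 2 * (n : ℝ) * c = (b : ℝ) + n + s := by
    rw [hc]; field_simp
  -- quadratic identity for c
  have hquad : (n : ℝ) * c ^ 2 = ((b : ℝ) + n) * c + 6 * n := by
    have h : (2 * (n : ℝ) * c - ((b : ℝ) + n)) ^ 2 = s ^ 2 := by rw [h2nc]; ring
    rw [hssq] at h
    have h4 : 4 * (n : ℝ) * ((n : ℝ) * c ^ 2) = 4 * (n : ℝ) * (((b : ℝ) + n) * c + 6 * n) := by
      linear_combination h
    exact mul_left_cancel₀ (by positivity : (4 : ℝ) * (n : ℝ) ≠ 0) h4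
  -- c > 3
  have hc3 : 3 < c := by
    have hkey : s > 6 * (n : ℝ) - ((b : ℝ) + n) := by
      rcases le_or_gt (6 * (n : ℝ) - ((b : ℝ) + n)) 0 with h | h
      · rcases eq_or_lt_of_le h with h' | h'
        · -- s > 0 since s² > 0
          have : 0 < s ^ 2 := by rw [hssq]; positivity
          nlinarith
        · linarith
      · have h2 : (6 * (n : ℝ) - ((b : ℝ) + n)) ^ 2 < s ^ 2 := by
          rw [hssq]; nlinarith
        nlinarith
    nlinarith [h2nc]
  have hcl : 3 * lam < c * lam := by nlinarith
  -- values of p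
  have hpneg : p (-(c * lam)) < 0 := by
    rw [hp]
    have : p (-(c * lam)) = p (-(c * lam)) := rfl
    -- p(-cλ) = c * lam^3 * (9 - c^2) using hquad
    nlinarith [mul_pos (mul_pos hlam hlam) hlam, hquad, sq_nonneg lam, sq_nonneg c,
      mul_pos hlam hlam,
      mul_pos (mul_pos (mul_pos hlam hlam) hlam) (mul_pos (by linarith : (0:ℝ) < c) (by nlinarith : (0:ℝ) < c ^ 2 - 9))]
  have hp3 : p (-(3 * lam)) = 6 * b * lam ^ 2 := by rw [hp]; ring
  have hp3pos : 0 < p (-(3 * lam)) := by rw [hp3]; positivity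
  have hp0 : p 0 = 12 * n * lam ^ 2 := by rw [hp]; ring
  have hp0pos : 0 < p 0 := by rw [hp0]; positivity
  refine ⟨hpneg, ⟨hp3, hp3pos⟩, ⟨hp0, hp0pos⟩, ?_⟩
  -- continuity
  have hpc : Continuous p := by
    have : p = fun x : ℝ => x ^ 3 - 2 * n * x ^ 2 - lam * (2 * b + 9 * lam + 2 * n) * x
        + 12 * n * lam ^ 2 := funext hp
    rw [this]; fun_prop
  have hab : -(c * lam) ≤ -(3 * lam) := by linarith
  have := intermediate_value_Ioo hab hpc.continuousOn
  have h0mem : (0 : ℝ) ∈ Set.Ioo (p (-(c * lam))) (p (-(3 * lam))) := ⟨hpneg, hp3pos⟩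
  obtain ⟨μ₀, hμmem, hμ0⟩ := this h0mem
  have hμneg : μ₀ < 0 := by have := hμmem.2; nlinarith
  -- uniqueness of the negative root
  have huniq : ∀ x : ℝ, p x = 0 → x < 0 → x = μ₀ := by
    intro x hx hxneg
    by_contra hne
    have hx' : x ^ 3 - 2 * n * x ^ 2 - lam * (2 * b + 9 * lam + 2 * n) * x
        + 12 * n * lam ^ 2 = 0 := by rw [← hp]; exact hx
    have hμ' : μ₀ ^ 3 - 2 * n * μ₀ ^ 2 - lam * (2 * b + 9 * lam + 2 * n) * μ₀
        + 12 * n * lam ^ 2 = 0 := by rw [← hp]; exact hμ0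
    have key : (x - μ₀) * (x * μ₀ * (x + μ₀) - 2 * n * (x * μ₀) - 12 * n * lam ^ 2) = 0 := by
      linear_combination μ₀ * hx' - x * hμ'
    rcases mul_eq_zero.mp key with h | h
    · exact hne (by linarith [sub_eq_zero.mp h])
    · have hxy : 0 < x * μ₀ := mul_pos_of_neg_of_neg hxneg hμneg
      have t1 : x * μ₀ * (x + μ₀) < 0 := mul_neg_of_pos_of_neg hxy (by linarith)
      have t2 : 0 < 2 * (n : ℝ) * (x * μ₀) := by positivity
      have t3 : 0 < 12 * (n : ℝ) * lam ^ 2 := by positivity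
      linarith
  refine ⟨μ₀, hμneg, hμ0, ⟨hμmem.1, hμmem.2⟩, huniq, ?_⟩
  intro x hx hne
  rcases lt_trichotomy x 0 with h | h | h
  · exact absurd (huniq x hx h) hne
  · exfalso; rw [h, hp0] at hx; nlinarith
  · exact h
end

section
/- Let n ≥ 1 be an integer, b ≥ 0 a real number, and λ > 0 a real number. Set μ' := λ(2b + n) + λ². Then the 3×3 real matrix M := μ'·I + A, where A has rows (λ, 0, −λ^{3/2}), (0, −λ, λ^{3/2}), (−λ^{−1/2}(b+n), λ^{−1/2}·b, n), has characteristic polynomial (X − μ')·(X − (μ' + n/2 + s))·(X − (μ' + n/2 − s)) where s := √(n²/4 + λ(2b+n) + λ²); in particular its eigenvalues are μ' and μ' + n/2 ± √(n²/4 + λ(2b+n) + λ²). -/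
/-!
`M` is the scalar shift `μ' • 1 + A`, so `χ_M = χ_A ∘ (X - μ')`. In every product of entries of
`A` the factors `√λ` and `(√λ)⁻¹` cancel, which gives `tr A = n`, sum of principal 2-minors
`-μ'` and `det A = 0`; hence `χ_A = X (X² - n X - μ')`. Since `s² = (n/2)² + μ'`, the quadratic
factor has the roots `n/2 ± s`.
-/

open Polynomial

namespace Matrix

variable {R : Type*} [CommRing R]

theorem charpoly_smul_one_add {ι : Type*} [Fintype ι] [DecidableEq ι] (c : R)
    (A : Matrix ι ι R) :
    (c • (1 : Matrix ι ι R) + A).charpoly = A.charpoly.comp (X - C c) := by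
  have h : c • (1 : Matrix ι ι R) + A = A - scalar ι (-c) := by
    rw [scalar_apply, ← smul_one_eq_diagonal, neg_smul, sub_neg_eq_add, add_comm]
  rw [h, charpoly_sub_scalar, map_neg, ← sub_eq_add_neg]

theorem charpoly_fin_three (A : Matrix (Fin 3) (Fin 3) R) :
    A.charpoly = X ^ 3 - C A.trace * X ^ 2
      + C (A 0 0 * A 1 1 - A 0 1 * A 1 0 + A 0 0 * A 2 2 - A 0 2 * A 2 0
          + A 1 1 * A 2 2 - A 1 2 * A 2 1) * X - C A.det := by
  simp only [charpoly, det_fin_three, charmatrix_apply, trace_fin_three, diagonal_apply,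
    Fin.reduceEq, if_true, if_false, map_add, map_sub, map_mul]
  ring

end Matrix

theorem Polynomial.X_sq_sub_C_mul_X_sub_C_eq_mul {K : Type*} [Field K] [NeZero (2 : K)]
    (p q s : K) (hs : s ^ 2 = (p / 2) ^ 2 + q) :
    X ^ 2 - C p * X - C q = (X - C (p / 2 + s)) * (X - C (p / 2 - s)) := by
  have hp : C p = 2 * C (p / 2) := by
    rw [← map_ofNat C 2, ← map_mul, mul_div_cancel₀ _ two_ne_zero]
  have hq : C q = C s ^ 2 - C (p / 2) ^ 2 := by
    rw [← map_pow, ← map_pow, ← map_sub, hs, add_sub_cancel_left]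
  rw [hp, hq, map_add, map_sub]
  ring

noncomputable def htypeBlock (n b lam : ℝ) : Matrix (Fin 3) (Fin 3) ℝ :=
  !![lam, 0, -(lam * Real.sqrt lam);
     0, -lam, lam * Real.sqrt lam;
     -((Real.sqrt lam)⁻¹ * (b + n)), (Real.sqrt lam)⁻¹ * b, n]

open Matrix in
theorem charpoly_htypeBlock (n b : ℝ) {lam : ℝ} (hlam : 0 < lam) :
    (htypeBlock n b lam).charpoly =
      X * (X ^ 2 - C n * X - C (lam * (2 * b + n) + lam ^ 2)) := by
  set A := htypeBlock n b lam
  have hsqrt : Real.sqrt lam * (Real.sqrt lam)⁻¹ = 1 := mul_inv_cancel₀ (by positivity)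
  have htrace : A.trace = n := by
    simp only [A, htypeBlock, trace_fin_three, of_apply, cons_val]
    ring
  have hminors : A 0 0 * A 1 1 - A 0 1 * A 1 0 + A 0 0 * A 2 2 - A 0 2 * A 2 0
      + A 1 1 * A 2 2 - A 1 2 * A 2 1 = -(lam * (2 * b + n) + lam ^ 2) := by
    simp only [A, htypeBlock, of_apply, cons_val]
    linear_combination (-lam * (2 * b + n)) * hsqrt
  have hdet : A.det = 0 := by
    simp only [A, htypeBlock, det_fin_three, of_apply, cons_val]
    linear_combination lam ^ 2 * n * hsqrt
  rw [charpoly_fin_three, htrace, hminors, hdet, map_neg, map_zero]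
  ring

theorem htype_laplacian_one_forms_charpoly_general (n : ℕ) (b lam : ℝ)
    (hb : 0 ≤ b) (hlam : 0 < lam)
    (μ' : ℝ) (hμ : μ' = lam * (2 * b + n) + lam ^ 2)
    (s : ℝ) (hs : s = Real.sqrt ((n : ℝ) ^ 2 / 4 + lam * (2 * b + n) + lam ^ 2))
    (M : Matrix (Fin 3) (Fin 3) ℝ)
    (hM : M = μ' • (1 : Matrix (Fin 3) (Fin 3) ℝ) +
      !![lam, 0, -(lam * Real.sqrt lam);
         0, -lam, lam * Real.sqrt lam;
         -((Real.sqrt lam)⁻¹ * (b + n)), (Real.sqrt lam)⁻¹ * b, (n : ℝ)]) :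
    M.charpoly =
      (X - C μ') * (X - C (μ' + n / 2 + s)) * (X - C (μ' + n / 2 - s)) := by
  have hM' : M = μ' • 1 + htypeBlock n b lam := hM
  have hs2 : s ^ 2 = ((n : ℝ) / 2) ^ 2 + μ' := by
    rw [hs, Real.sq_sqrt (by positivity), hμ]
    ring
  rw [hM', Matrix.charpoly_smul_one_add, charpoly_htypeBlock _ _ hlam, ← hμ,
    X_sq_sub_C_mul_X_sub_C_eq_mul _ _ _ hs2]
  simp only [mul_comp, sub_comp, add_comp, X_comp, C_comp, map_add, map_sub]
  ring

/-- The matrix of the Laplacian on 1-forms on an H-type group, restricted to the invariant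
subspace spanned by `v₁, v₂, v₃`, has characteristic polynomial
`(X − μ')(X − (μ' + n/2 + s))(X − (μ' + n/2 − s))` with `s = √(n²/4 + λ(2b+n) + λ²)`;
in particular its eigenvalues are `μ'` and `μ' + n/2 ± s`. -/
theorem htype_laplacian_one_forms_charpoly (n : ℕ) (hn : 1 ≤ n) (b lam : ℝ)
    (hb : 0 ≤ b) (hlam : 0 < lam)
    (μ' : ℝ) (hμ : μ' = lam * (2 * b + n) + lam ^ 2)
    (s : ℝ) (hs : s = Real.sqrt ((n : ℝ) ^ 2 / 4 + lam * (2 * b + n) + lam ^ 2))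
    (M : Matrix (Fin 3) (Fin 3) ℝ)
    (hM : M = μ' • (1 : Matrix (Fin 3) (Fin 3) ℝ) +
      !![lam, 0, -(lam * Real.sqrt lam);
         0, -lam, lam * Real.sqrt lam;
         -((Real.sqrt lam)⁻¹ * (b + n)), (Real.sqrt lam)⁻¹ * b, (n : ℝ)]) :
    M.charpoly =
      (X - C μ') * (X - C (μ' + n / 2 + s)) * (X - C (μ' + n / 2 - s)) :=
  htype_laplacian_one_forms_charpoly_general n b lam hb hlam μ' hμ s hs M hM
end

section
/- Let m be a nonnegative integer, a > 0 a real number, and f : [0,∞) → ℝ a continuous function with f(k) ≥ 0 for all k. Then, as T → ∞, ∫₀^∞ k^m e^{−T(ak + k²·f(k))} dk = m!·(aT)^{−(m+1)} + O(T^{−(m+2)}). -/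
/-!
Write `h_T(k) = k^m e^{-aTk}`, whose integral is `m!/(aT)^{m+1}`; the integrand is
`h_T(k) e^{-x}` with `x = T k² f(k) ≥ 0`. Since `0 ≤ 1 - e^{-x} ≤ min(1, x)`, the boundedness of `f`
on `[0, 1]` for `k ≤ 1`, and `1 ≤ T k²` for `k, T ≥ 1`, give `|e^{-x} - 1| ≤ C T k²` uniformly.
The error is thus at most `C T ∫ k^{m+2} e^{-aTk} dk = C T (m+2)!/(aT)^{m+3} = O(T^{-(m+2)})`.
-/

open Filter MeasureTheory Set Real

lemma integrableOn_pow_mul_exp_neg_mul_Ioi (n : ℕ) {r : ℝ} (hr : 0 < r) :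
    IntegrableOn (fun k : ℝ => k ^ n * exp (-(r * k))) (Ioi 0) := by
  simpa [rpow_natCast] using
    integrableOn_rpow_mul_exp_neg_mul_rpow (s := n) (p := 1) (by linarith [n.cast_nonneg (α := ℝ)])
      one_pos hr

lemma integral_pow_mul_exp_neg_mul_Ioi (n : ℕ) {r : ℝ} (hr : 0 < r) :
    ∫ k in Ioi (0 : ℝ), k ^ n * exp (-(r * k)) = n.factorial / r ^ (n + 1) := by
  have h := integral_rpow_mul_exp_neg_mul_Ioi (a := (n + 1 : ℕ)) (by positivity) hr
  simp_rw [Nat.cast_add_one, add_sub_cancel_right, rpow_natCast, Gamma_nat_eq_factorial] at h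
  rw [h, ← Nat.cast_add_one, rpow_natCast, one_div_pow, one_div_mul_eq_div]

lemma abs_integral_Ioi_sub_factorial_div_le {m : ℕ} {r ε : ℝ} (hr : 0 < r) {g : ℝ → ℝ}
    (hg : AEStronglyMeasurable g (volume.restrict (Ioi 0)))
    (hbound : ∀ k ∈ Ioi (0 : ℝ),
      |g k - k ^ m * exp (-(r * k))| ≤ ε * (k ^ (m + 2) * exp (-(r * k)))) :
    |(∫ k in Ioi (0 : ℝ), g k) - m.factorial / r ^ (m + 1)|
      ≤ ε * ((m + 2).factorial / r ^ (m + 2 + 1)) := by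
  have hh := integrableOn_pow_mul_exp_neg_mul_Ioi m hr
  have hB := (integrableOn_pow_mul_exp_neg_mul_Ioi (m + 2) hr).const_mul ε
  have hdiff : IntegrableOn (fun k => g k - k ^ m * exp (-(r * k))) (Ioi 0) :=
    hB.mono' (hg.sub hh.aestronglyMeasurable) <|
      (ae_restrict_mem measurableSet_Ioi).mono fun k hk => hbound k hk
  have hg_int : IntegrableOn g (Ioi 0) :=
    (hdiff.add hh).congr_fun (fun k _ => sub_add_cancel _ _) measurableSet_Ioi
  rw [← integral_pow_mul_exp_neg_mul_Ioi m hr, ← integral_sub hg_int hh,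
    ← integral_pow_mul_exp_neg_mul_Ioi (m + 2) hr, ← integral_const_mul]
  exact norm_integral_le_of_norm_le hB <|
    (ae_restrict_mem measurableSet_Ioi).mono fun k hk => (Real.norm_eq_abs _).trans_le (hbound k hk)

lemma exists_abs_exp_neg_mul_sq_mul_sub_one_le {f : ℝ → ℝ} (hf : ContinuousOn f (Ici 0))
    (hf0 : ∀ k : ℝ, 0 ≤ k → 0 ≤ f k) :
    ∃ C : ℝ, ∀ T : ℝ, 1 ≤ T → ∀ k : ℝ, 0 ≤ k →
      |exp (-(T * (k ^ 2 * f k))) - 1| ≤ C * T * k ^ 2 := by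
  obtain ⟨M, hM⟩ := (isCompact_Icc (a := (0 : ℝ)) (b := 1)).exists_bound_of_continuousOn
    (hf.mono Set.Icc_subset_Ici_self)
  refine ⟨max M 1, fun T hT k hk => ?_⟩
  have hx : 0 ≤ T * (k ^ 2 * f k) := by have := hf0 k hk; positivity
  have hTk : 0 ≤ T * k ^ 2 := by positivity
  rw [abs_sub_comm, abs_of_nonneg (by simpa using exp_le_one_iff.mpr (neg_nonpos.mpr hx))]
  rcases le_or_gt k 1 with hk1 | hk1
  · have hfM : f k ≤ max M 1 := ((le_abs_self _).trans (hM k ⟨hk, hk1⟩)).trans (le_max_left _ _)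
    calc 1 - exp (-(T * (k ^ 2 * f k))) ≤ T * (k ^ 2 * f k) := by
          linarith [add_one_le_exp (-(T * (k ^ 2 * f k)))]
      _ = (T * k ^ 2) * f k := by ring
      _ ≤ (T * k ^ 2) * max M 1 := mul_le_mul_of_nonneg_left hfM hTk
      _ = max M 1 * T * k ^ 2 := by ring
  · calc 1 - exp (-(T * (k ^ 2 * f k))) ≤ 1 := by linarith [exp_pos (-(T * (k ^ 2 * f k)))]
      _ ≤ T * k ^ 2 := one_le_mul_of_one_le_of_one_le hT (one_le_pow₀ hk1.le)
      _ ≤ max M 1 * T * k ^ 2 := by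
        rw [mul_assoc]; exact le_mul_of_one_le_left hTk (le_max_right _ _)

lemma abs_pow_mul_exp_neg_add_sub_le {m : ℕ} {k r x ε : ℝ} (hk : 0 ≤ k)
    (hx : |exp (-x) - 1| ≤ ε * k ^ 2) :
    |k ^ m * exp (-(r * k + x)) - k ^ m * exp (-(r * k))| ≤ ε * (k ^ (m + 2) * exp (-(r * k))) :=
  calc |k ^ m * exp (-(r * k + x)) - k ^ m * exp (-(r * k))|
      = k ^ m * exp (-(r * k)) * |exp (-x) - 1| := by
        rw [neg_add, exp_add, ← mul_assoc, ← mul_sub_one, abs_mul, abs_of_nonneg (by positivity)]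
    _ ≤ k ^ m * exp (-(r * k)) * (ε * k ^ 2) := mul_le_mul_of_nonneg_left hx (by positivity)
    _ = ε * (k ^ (m + 2) * exp (-(r * k))) := by ring

/-- Large-time asymptotics of the Laplace-type integral `∫₀^∞ k^m e^{−T(ak + k²f(k))} dk`:
it equals `m!·(aT)^{−(m+1)}` up to an error `O(T^{−(m+2)})` as `T → ∞`. -/
theorem laplace_integral_linear_decay (m : ℕ) (a : ℝ) (ha : 0 < a)
    (f : ℝ → ℝ) (hf : ContinuousOn f (Set.Ici 0)) (hf0 : ∀ k : ℝ, 0 ≤ k → 0 ≤ f k) :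
    (fun T : ℝ =>
        (∫ k in Set.Ioi (0 : ℝ), k ^ m * Real.exp (-(T * (a * k + k ^ 2 * f k))))
          - (Nat.factorial m : ℝ) / (a * T) ^ (m + 1))
      =O[atTop] fun T : ℝ => 1 / T ^ (m + 2) := by
  obtain ⟨C, hC⟩ := exists_abs_exp_neg_mul_sq_mul_sub_one_le hf hf0
  refine Asymptotics.IsBigO.of_bound (C * (m + 2).factorial / a ^ (m + 3)) ?_
  filter_upwards [eventually_ge_atTop 1] with T hT
  have hT0 : 0 < T := one_pos.trans_le hT
  have hg : ContinuousOn (fun k => k ^ m * exp (-(T * (a * k + k ^ 2 * f k)))) (Ici 0) := by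
    fun_prop
  have hbound := abs_integral_Ioi_sub_factorial_div_le (m := m) (ε := C * T) (mul_pos ha hT0)
    (hg.mono Ioi_subset_Ici_self |>.aestronglyMeasurable measurableSet_Ioi) fun k (hk : 0 < k) => by
      rw [show T * (a * k + k ^ 2 * f k) = a * T * k + T * (k ^ 2 * f k) by ring]
      exact abs_pow_mul_exp_neg_add_sub_le hk.le (hC T hT k hk.le)
  simp only [norm_eq_abs, abs_of_pos (one_div_pos.mpr (pow_pos hT0 _))]
  exact hbound.trans_eq (by field_simp; ring)
end

section
/- For every real t > 0 and every j = 1,…,n, the operators d(t) and U_{jj} on P_n ⊗ Λ commute: d(t) ∘ U_{jj} = U_{jj} ∘ d(t). Consequently, for every γ ∈ ℤ^n and 0 ≤ p ≤ 2n, d(t) maps V^{p,n,γ} into V^{p+1,n,γ}. -/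
open scoped TensorProduct

noncomputable section

namespace HeisenbergModel

variable (n : ℕ)

/-- Algebraic model of anti-Fock space: the polynomial algebra `ℂ[x_1,…,x_n]`. -/
abbrev P := MvPolynomial (Fin n) ℂ

/-- The `(2n+1)`-dimensional coefficient space with distinguished basis
`τ^1,…,τ^n, τ^{1̄},…,τ^{n̄}, τ^w`. -/
abbrev Vc := Fin (2 * n + 1) → ℂ

/-- The exterior algebra `Λ = ⋀ V`. -/
abbrev Lam := ExteriorAlgebra ℂ (Vc n)

/-- The space `P_n ⊗ Λ` on which all operators act. -/
abbrev PL := P n ⊗[ℂ] Lam n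

/-- Index of the basis vector `τ^j`. -/
def idx1 (j : Fin n) : Fin (2 * n + 1) := ⟨j.1, by omega⟩

/-- Index of the basis vector `τ^{j̄}`. -/
def idx2 (j : Fin n) : Fin (2 * n + 1) := ⟨n + j.1, by omega⟩

/-- Index of the basis vector `τ^w`. -/
def idxw : Fin (2 * n + 1) := ⟨2 * n, by omega⟩

/-- The distinguished basis vectors of `V`. -/
def tau (i : Fin (2 * n + 1)) : Vc n := Pi.single i 1

/-- The dual-basis functionals on `V`. -/
def dualf (i : Fin (2 * n + 1)) : Module.Dual ℂ (Vc n) := LinearMap.proj i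

/-- Annihilation operator `a_j = ∂/∂x_j` on `P_n`. -/
def aOp (j : Fin n) : P n →ₗ[ℂ] P n := (MvPolynomial.pderiv j).toLinearMap

/-- Creation operator `a_j^* = (multiplication by x_j)` on `P_n`. -/
def aStarOp (j : Fin n) : P n →ₗ[ℂ] P n := LinearMap.mulLeft ℂ (MvPolynomial.X j)

/-- Left exterior multiplication `e(v)` on `Λ`. -/
def eMulV (v : Vc n) : Lam n →ₗ[ℂ] Lam n := LinearMap.mulLeft ℂ (ExteriorAlgebra.ι ℂ v)

/-- Interior multiplication (left contraction) by a dual functional on `Λ`. -/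
def iMulF (f : Module.Dual ℂ (Vc n)) : Lam n →ₗ[ℂ] Lam n :=
  CliffordAlgebra.contractLeft (Q := (0 : QuadraticForm ℂ (Vc n))) f

/-- Lift an operator on `P_n` to `P_n ⊗ Λ` (acting on the first factor). -/
def onP (f : P n →ₗ[ℂ] P n) : PL n →ₗ[ℂ] PL n := LinearMap.rTensor (Lam n) f

/-- Lift an operator on `Λ` to `P_n ⊗ Λ` (acting on the second factor). -/
def onL (f : Lam n →ₗ[ℂ] Lam n) : PL n →ₗ[ℂ] PL n := LinearMap.lTensor (P n) f

/-- `a_j` acting on `P_n ⊗ Λ`. -/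
def A (j : Fin n) : PL n →ₗ[ℂ] PL n := onP n (aOp n j)

/-- `a_j^*` acting on `P_n ⊗ Λ`. -/
def Astar (j : Fin n) : PL n →ₗ[ℂ] PL n := onP n (aStarOp n j)

/-- `e(τ^j)` acting on `P_n ⊗ Λ`. -/
def E1 (j : Fin n) : PL n →ₗ[ℂ] PL n := onL n (eMulV n (tau n (idx1 n j)))

/-- `e(τ^{j̄})` acting on `P_n ⊗ Λ`. -/
def E2 (j : Fin n) : PL n →ₗ[ℂ] PL n := onL n (eMulV n (tau n (idx2 n j)))

/-- `e(τ^w)` acting on `P_n ⊗ Λ`. -/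
def Ew : PL n →ₗ[ℂ] PL n := onL n (eMulV n (tau n (idxw n)))

/-- `i(Z_j)` acting on `P_n ⊗ Λ`. -/
def I1 (j : Fin n) : PL n →ₗ[ℂ] PL n := onL n (iMulF n (dualf n (idx1 n j)))

/-- `i(Z_{j̄})` acting on `P_n ⊗ Λ`. -/
def I2 (j : Fin n) : PL n →ₗ[ℂ] PL n := onL n (iMulF n (dualf n (idx2 n j)))

/-- `i(W)` acting on `P_n ⊗ Λ`. -/
def Iw : PL n →ₗ[ℂ] PL n := onL n (iMulF n (dualf n (idxw n)))

/-- `θ_j(t) = −√(−1)·√t·(e(τ^j) a_j^* + e(τ^{j̄}) a_j) − √(−1)·e(τ^j) e(τ^{j̄}) i(W)`. -/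
def theta (t : ℝ) (j : Fin n) : PL n →ₗ[ℂ] PL n :=
  (-(Complex.I * (Real.sqrt t : ℝ))) • (E1 n j ∘ₗ Astar n j + E2 n j ∘ₗ A n j)
    - Complex.I • (E1 n j ∘ₗ E2 n j ∘ₗ Iw n)

/-- `θ_j^†(t) = √(−1)·√t·(i(Z_j) a_j + i(Z_{j̄}) a_j^*) + √(−1)·e(τ^w) i(Z_{j̄}) i(Z_j)`. -/
def thetaDag (t : ℝ) (j : Fin n) : PL n →ₗ[ℂ] PL n :=
  (Complex.I * (Real.sqrt t : ℝ)) • (I1 n j ∘ₗ A n j + I2 n j ∘ₗ Astar n j)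
    + Complex.I • (Ew n ∘ₗ I2 n j ∘ₗ I1 n j)

/-- `d(t) = Σ_j θ_j(t) − √(−1)·t·e(τ^w)`. -/
def dOp (t : ℝ) : PL n →ₗ[ℂ] PL n :=
  (∑ j : Fin n, theta n t j) - (Complex.I * (t : ℝ)) • Ew n

/-- `U_{jj} = a_j^* a_j − e(τ^j) i(Z_j) + e(τ^{j̄}) i(Z_{j̄})`. -/
def Udiag (j : Fin n) : PL n →ₗ[ℂ] PL n :=
  Astar n j ∘ₗ A n j - E1 n j ∘ₗ I1 n j + E2 n j ∘ₗ I2 n j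

/-- The `(i,j)` transposition operator `U_{ij} = a_i^* a_j − e(τ^j) i(Z_i) + e(τ^{ī}) i(Z_{j̄})`. -/
def Uoff (i j : Fin n) : PL n →ₗ[ℂ] PL n :=
  Astar n i ∘ₗ A n j - E1 n j ∘ₗ I1 n i + E2 n i ∘ₗ I2 n j

/-- The degree-`p` component `Λ^p` of the exterior algebra, as a submodule. -/
def LamP (p : ℕ) : Submodule ℂ (Lam n) :=
  LinearMap.range (ExteriorAlgebra.ι ℂ : Vc n →ₗ[ℂ] Lam n) ^ p

/-- The subspace `P_n ⊗ Λ^p` of `P_n ⊗ Λ`. -/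
def Wp (p : ℕ) : Submodule ℂ (PL n) :=
  LinearMap.range (TensorProduct.map (LinearMap.id : P n →ₗ[ℂ] P n) (LamP n p).subtype)

/-- The simultaneous eigenspace `V^{p,n,γ} = {v ∈ P_n ⊗ Λ^p : U_{jj} v = γ_j v for all j}`. -/
def Vpγ (p : ℕ) (γ : Fin n → ℤ) : Submodule ℂ (PL n) :=
  Wp n p ⊓ ⨅ j : Fin n, Module.End.eigenspace (Udiag n j) ((γ j : ℂ))

end HeisenbergModel

/-! The derivation `ad U_{jj}` of `End(P_n ⊗ Λ)` acts diagonally on the generators: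
`a_j^*`, `e(τ^{j̄})`, `i(Z_j)` have eigenvalue `1`; `a_j`, `e(τ^j)`, `i(Z_{j̄})` have eigenvalue
`-1`; all other `a_k`, `a_k^*`, `e(τ^i)`, `i(Z_i)` (including `i = w`) have eigenvalue `0`.
Eigenvalues add under products, and each monomial `e(τ^k) a_k^*`, `e(τ^{k̄}) a_k`,
`e(τ^k) e(τ^{k̄}) i(W)`, `e(τ^w)` of `d(t)` has eigenvalue `0`, so `d(t)` commutes with `U_{jj}`
and preserves its eigenspaces. Each monomial also raises the exterior degree by one. -/

theorem lie_mul_eq_smul_of_lie_eq_smul {K A : Type*} [CommRing K] [Ring A] [Algebra K A]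
    {u x y : A} {a b : K} (hx : ⁅u, x⁆ = a • x) (hy : ⁅u, y⁆ = b • y) :
    ⁅u, x * y⁆ = (a + b) • (x * y) := by
  have leibniz : ⁅u, x * y⁆ = ⁅u, x⁆ * y + x * ⁅u, y⁆ := by
    simp only [Ring.lie_def]; noncomm_ring
  rw [leibniz, hx, hy, smul_mul_assoc, mul_smul_comm, add_smul]

/- `add_lie` needs a `LieRing` instance, which an associative ring does not carry globally;
these are the versions for the commutator bracket `Ring.instBracket`. -/
namespace Ring

variable {A : Type*} [Ring A]

theorem add_lie (a b x : A) : ⁅a + b, x⁆ = ⁅a, x⁆ + ⁅b, x⁆ := by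
  simp only [lie_def]; noncomm_ring

theorem sub_lie (a b x : A) : ⁅a - b, x⁆ = ⁅a, x⁆ - ⁅b, x⁆ := by
  simp only [lie_def]; noncomm_ring

end Ring

namespace MvPolynomial

variable {R σ : Type*} [CommRing R]

theorem pderiv_pderiv_comm (i j : σ) (p : MvPolynomial σ R) :
    pderiv i (pderiv j p) = pderiv j (pderiv i p) := by
  classical
  have h : ⁅pderiv i, pderiv j⁆ = (0 : Derivation R (MvPolynomial σ R) (MvPolynomial σ R)) :=
    derivation_ext fun k => by
      rw [Derivation.commutator_apply]
      simp [pderiv_X, Pi.single_apply, apply_ite]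
  have := congrArg (· p) h
  rw [Derivation.commutator_apply] at this
  simpa [sub_eq_zero] using this

variable [DecidableEq σ]

theorem lie_mulLeft_X_mul_pderiv_mulLeft_X (j k : σ) :
    ⁅LinearMap.mulLeft R (X j : MvPolynomial σ R) * (pderiv (R := R) j).toLinearMap,
        LinearMap.mulLeft R (X k : MvPolynomial σ R)⁆
      = (if j = k then 1 else 0 : R) • LinearMap.mulLeft R (X k) := by
  refine LinearMap.ext fun q => ?_
  by_cases h : j = k
  · subst h; simp [Ring.lie_def]; ring
  · simp [Ring.lie_def, pderiv_X_of_ne (Ne.symm h), h]; ring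

theorem lie_mulLeft_X_mul_pderiv_pderiv (j k : σ) :
    ⁅LinearMap.mulLeft R (X j : MvPolynomial σ R) * (pderiv (R := R) j).toLinearMap,
        (pderiv (R := R) k).toLinearMap⁆
      = -(if j = k then 1 else 0 : R) • (pderiv (R := R) k).toLinearMap := by
  refine LinearMap.ext fun q => ?_
  by_cases h : j = k
  · subst h; simp [Ring.lie_def]
  · simp [Ring.lie_def, h, pderiv_pderiv_comm k j]

end MvPolynomial

namespace ExteriorAlgebra

open CliffordAlgebra

variable {R M : Type*} [CommRing R] [AddCommGroup M] [Module R M]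

theorem lie_mulLeft_ι_mul_contractLeft_mulLeft_ι (u v : M) (f : Module.Dual R M) :
    ⁅LinearMap.mulLeft R (ι R u) * contractLeft (Q := 0) f, LinearMap.mulLeft R (ι R v)⁆
      = f v • LinearMap.mulLeft R (ι R u) := by
  refine LinearMap.ext fun x => ?_
  simp only [Ring.lie_def, LinearMap.sub_apply, Module.End.mul_apply, LinearMap.mulLeft_apply,
    contractLeft_ι_mul, LinearMap.smul_apply, mul_sub, mul_smul_comm, ← mul_assoc]
  rw [sub_sub, ← add_mul, ι_add_mul_swap, zero_mul, sub_zero]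

theorem lie_mulLeft_ι_mul_contractLeft_contractLeft (u : M) (f g : Module.Dual R M) :
    ⁅LinearMap.mulLeft R (ι R u) * contractLeft (Q := 0) f, contractLeft (Q := 0) g⁆
      = -(g u • contractLeft (Q := 0) f) := by
  refine LinearMap.ext fun x => ?_
  simp only [Ring.lie_def, LinearMap.sub_apply, Module.End.mul_apply, LinearMap.mulLeft_apply,
    contractLeft_ι_mul, LinearMap.smul_apply, LinearMap.neg_apply, contractLeft_comm g f, mul_neg]
  abel

theorem mulLeft_ι_mul_contractLeft_of_apply_eq_zero {f : Module.Dual R M} {v : M} (h : f v = 0) :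
    LinearMap.mulLeft R (ι R v) * contractLeft (Q := 0) f
      = -(contractLeft (Q := 0) f * LinearMap.mulLeft R (ι R v)) := by
  refine LinearMap.ext fun x => ?_
  simp [contractLeft_ι_mul, h]

theorem ι_mul_mem_exteriorPower {p : ℕ} (v : M) {x : ExteriorAlgebra R M}
    (hx : x ∈ ⋀[R]^p M) : ι R v * x ∈ ⋀[R]^(p + 1) M := by
  rw [exteriorPower, pow_succ']
  exact Submodule.mul_mem_mul (LinearMap.mem_range_self _ v) hx

theorem contractLeft_mem_exteriorPower {p : ℕ} (f : Module.Dual R M) {x : ExteriorAlgebra R M}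
    (hx : x ∈ ⋀[R]^(p + 1) M) : contractLeft (Q := 0) f x ∈ ⋀[R]^p M := by
  induction p generalizing x with
  | zero =>
    rw [zero_add, exteriorPower, pow_one] at hx
    obtain ⟨v, rfl⟩ := hx
    rw [contractLeft_ι, exteriorPower, pow_zero]
    exact Submodule.algebraMap_mem _
  | succ p ih =>
    rw [exteriorPower, pow_succ'] at hx
    induction hx using Submodule.mul_induction_on' with
    | mem_mul_mem m hm y hy =>
      obtain ⟨v, rfl⟩ := hm
      rw [contractLeft_ι_mul]
      exact sub_mem (Submodule.smul_mem _ _ hy) (ι_mul_mem_exteriorPower v (ih hy))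
    | add x _ y _ hx hy => rw [map_add]; exact add_mem hx hy

end ExteriorAlgebra

namespace HeisenbergModel

variable {n : ℕ}

lemma onL_mul (f g : Module.End ℂ (Lam n)) : onL n (f * g) = onL n f * onL n g :=
  LinearMap.lTensor_mul _ _ _

lemma onP_mul (f g : Module.End ℂ (P n)) : onP n (f * g) = onP n f * onP n g :=
  LinearMap.rTensor_mul _ _ _

lemma lie_onL (f g : Module.End ℂ (Lam n)) : ⁅onL n f, onL n g⁆ = onL n ⁅f, g⁆ := by
  simp only [Ring.lie_def, onL, LinearMap.lTensor_sub, LinearMap.lTensor_mul]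

lemma lie_onP (f g : Module.End ℂ (P n)) : ⁅onP n f, onP n g⁆ = onP n ⁅f, g⁆ := by
  simp only [Ring.lie_def, onP, LinearMap.rTensor_sub, LinearMap.rTensor_mul]

lemma commute_onP_onL (f : Module.End ℂ (P n)) (g : Module.End ℂ (Lam n)) :
    Commute (onP n f) (onL n g) := by
  rw [Commute, SemiconjBy, Module.End.mul_eq_comp, Module.End.mul_eq_comp, onP, onL,
    LinearMap.rTensor_comp_lTensor, LinearMap.lTensor_comp_rTensor]

lemma dualf_tau (i k : Fin (2 * n + 1)) : dualf n i (tau n k) = if i = k then 1 else 0 := by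
  simp [dualf, tau, Pi.single_apply]

variable (n) in
abbrev extMul (i : Fin (2 * n + 1)) : Module.End ℂ (PL n) := onL n (eMulV n (tau n i))

variable (n) in
abbrev intMul (i : Fin (2 * n + 1)) : Module.End ℂ (PL n) := onL n (iMulF n (dualf n i))

lemma lie_extMul_mul_intMul_extMul (i k : Fin (2 * n + 1)) :
    ⁅extMul n i * intMul n i, extMul n k⁆ = (if i = k then 1 else 0 : ℂ) • extMul n k := by
  rw [extMul, intMul, extMul, ← onL_mul, lie_onL, eMulV, eMulV, iMulF,
    ExteriorAlgebra.lie_mulLeft_ι_mul_contractLeft_mulLeft_ι, dualf_tau]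
  by_cases h : i = k
  · subst h; simp
  · simp [h, onL]

lemma lie_extMul_mul_intMul_intMul (i k : Fin (2 * n + 1)) :
    ⁅extMul n i * intMul n i, intMul n k⁆ = -(if i = k then 1 else 0 : ℂ) • intMul n k := by
  rw [extMul, intMul, intMul, ← onL_mul, lie_onL, eMulV, iMulF, iMulF,
    ExteriorAlgebra.lie_mulLeft_ι_mul_contractLeft_contractLeft, dualf_tau]
  by_cases h : i = k
  · subst h; simp [onL, neg_smul (1 : ℂ) (LinearMap.lTensor (P n) _)]
  · simp [h, Ne.symm h, onL]

lemma lie_extMul_mul_intMul_onP (i : Fin (2 * n + 1)) (f : Module.End ℂ (P n)) :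
    ⁅extMul n i * intMul n i, onP n f⁆ = 0 :=
  ((commute_onP_onL f _).symm.mul_left (commute_onP_onL f _).symm).lie_eq

lemma extMul_mul_intMul_of_ne {i k : Fin (2 * n + 1)} (h : i ≠ k) :
    extMul n k * intMul n i = -(intMul n i * extMul n k) := by
  rw [extMul, intMul, ← onL_mul, ← onL_mul, eMulV, iMulF,
    ExteriorAlgebra.mulLeft_ι_mul_contractLeft_of_apply_eq_zero (by rw [dualf_tau, if_neg h]),
    onL, onL, LinearMap.lTensor_neg]

lemma idx1_eq_idx1_iff {j k : Fin n} : idx1 n j = idx1 n k ↔ j = k := by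
  simp [idx1, Fin.ext_iff]

lemma idx2_eq_idx2_iff {j k : Fin n} : idx2 n j = idx2 n k ↔ j = k := by
  simp [idx2, Fin.ext_iff]

lemma idx2_ne_idx1 (j k : Fin n) : idx2 n j ≠ idx1 n k := by
  simp [idx1, idx2, Fin.ext_iff]; omega

lemma idx1_ne_idx2 (j k : Fin n) : idx1 n j ≠ idx2 n k := (idx2_ne_idx1 k j).symm

lemma idx1_ne_idxw (j : Fin n) : idx1 n j ≠ idxw n := by
  simp [idx1, idxw, Fin.ext_iff]; omega

lemma idx2_ne_idxw (j : Fin n) : idx2 n j ≠ idxw n := by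
  simp [idx2, idxw, Fin.ext_iff]; omega

variable (n) in
def charge (j : Fin n) (i : Fin (2 * n + 1)) : ℂ :=
  (if idx2 n j = i then 1 else 0) - (if idx1 n j = i then 1 else 0)

lemma charge_idx1 (j k : Fin n) : charge n j (idx1 n k) = -(if j = k then 1 else 0) := by
  simp [charge, idx2_ne_idx1, idx1_eq_idx1_iff]

lemma charge_idx2 (j k : Fin n) : charge n j (idx2 n k) = if j = k then 1 else 0 := by
  simp [charge, idx1_ne_idx2, idx2_eq_idx2_iff]

lemma charge_idxw (j : Fin n) : charge n j (idxw n) = 0 := by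
  simp [charge, idx1_ne_idxw, idx2_ne_idxw]

lemma Udiag_eq (j : Fin n) : Udiag n j = onP n (aStarOp n j * aOp n j)
    - extMul n (idx1 n j) * intMul n (idx1 n j) + extMul n (idx2 n j) * intMul n (idx2 n j) := by
  rw [onP_mul]; rfl

lemma lie_Udiag (j : Fin n) (x : Module.End ℂ (PL n)) : ⁅Udiag n j, x⁆
    = ⁅onP n (aStarOp n j * aOp n j), x⁆ - ⁅extMul n (idx1 n j) * intMul n (idx1 n j), x⁆
      + ⁅extMul n (idx2 n j) * intMul n (idx2 n j), x⁆ := by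
  -- naming the ring lets its operations unify with the `LinearMap` ones in `Udiag`
  rw [Udiag_eq, Ring.add_lie (A := Module.End ℂ (PL n)),
    Ring.sub_lie (A := Module.End ℂ (PL n))]

lemma lie_Udiag_extMul (j : Fin n) (i : Fin (2 * n + 1)) :
    ⁅Udiag n j, extMul n i⁆ = charge n j i • extMul n i := by
  rw [lie_Udiag, (commute_onP_onL _ _).lie_eq, lie_extMul_mul_intMul_extMul,
    lie_extMul_mul_intMul_extMul, charge]
  module

lemma lie_Udiag_intMul (j : Fin n) (i : Fin (2 * n + 1)) :
    ⁅Udiag n j, intMul n i⁆ = -charge n j i • intMul n i := by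
  rw [lie_Udiag, (commute_onP_onL _ _).lie_eq, lie_extMul_mul_intMul_intMul,
    lie_extMul_mul_intMul_intMul, charge]
  module

lemma lie_Udiag_A (j k : Fin n) :
    ⁅Udiag n j, A n k⁆ = -(if j = k then 1 else 0 : ℂ) • A n k := by
  rw [lie_Udiag, A, lie_onP, lie_extMul_mul_intMul_onP, lie_extMul_mul_intMul_onP]
  simp only [aStarOp, aOp, MvPolynomial.lie_mulLeft_X_mul_pderiv_pderiv, onP,
    LinearMap.rTensor_smul]
  module

lemma lie_Udiag_Astar (j k : Fin n) :
    ⁅Udiag n j, Astar n k⁆ = (if j = k then 1 else 0 : ℂ) • Astar n k := by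
  rw [lie_Udiag, Astar, lie_onP, lie_extMul_mul_intMul_onP, lie_extMul_mul_intMul_onP]
  simp only [aStarOp, aOp, MvPolynomial.lie_mulLeft_X_mul_pderiv_mulLeft_X, onP,
    LinearMap.rTensor_smul]
  module

lemma theta_eq (t : ℝ) (k : Fin n) : theta n t k =
    (-(Complex.I * (Real.sqrt t : ℝ))) •
        (extMul n (idx1 n k) * Astar n k + extMul n (idx2 n k) * A n k)
      - Complex.I • (extMul n (idx1 n k) * (extMul n (idx2 n k) * intMul n (idxw n))) :=
  rfl

lemma commute_Udiag_theta (t : ℝ) (j k : Fin n) : Commute (Udiag n j) (theta n t k) := by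
  have h1 : ⁅Udiag n j, extMul n (idx1 n k) * Astar n k⁆ = 0 := by
    rw [lie_mul_eq_smul_of_lie_eq_smul (lie_Udiag_extMul j _) (lie_Udiag_Astar j k),
      charge_idx1, neg_add_cancel, zero_smul]
  have h2 : ⁅Udiag n j, extMul n (idx2 n k) * A n k⁆ = 0 := by
    rw [lie_mul_eq_smul_of_lie_eq_smul (lie_Udiag_extMul j _) (lie_Udiag_A j k),
      charge_idx2, add_neg_cancel, zero_smul]
  have h3 :
      ⁅Udiag n j, extMul n (idx1 n k) * (extMul n (idx2 n k) * intMul n (idxw n))⁆ = 0 := by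
    rw [lie_mul_eq_smul_of_lie_eq_smul (lie_Udiag_extMul j _)
      (lie_mul_eq_smul_of_lie_eq_smul (lie_Udiag_extMul j _) (lie_Udiag_intMul j _)),
      charge_idx1, charge_idx2, charge_idxw, neg_zero, add_zero, neg_add_cancel, zero_smul]
  rw [theta_eq]
  exact (((commute_iff_lie_eq.2 h1).add_right (commute_iff_lie_eq.2 h2)).smul_right _).sub_right
    ((commute_iff_lie_eq.2 h3).smul_right _)

lemma commute_Udiag_dOp (t : ℝ) (j : Fin n) : Commute (Udiag n j) (dOp n t) := by
  have hw : ⁅Udiag n j, extMul n (idxw n)⁆ = 0 := by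
    rw [lie_Udiag_extMul, charge_idxw, zero_smul]
  exact (Commute.sum_right _ _ _ fun k _ => commute_Udiag_theta t j k).sub_right
    ((commute_iff_lie_eq.2 hw).smul_right _)

lemma mapsTo_map {p q : ℕ} (f : Module.End ℂ (P n)) {g : Module.End ℂ (Lam n)}
    (hg : ∀ x ∈ ⋀[ℂ]^p (Vc n), g x ∈ ⋀[ℂ]^q (Vc n)) :
    Set.MapsTo (TensorProduct.map f g) (Wp n p) (Wp n q) := by
  rintro _ ⟨w, rfl⟩
  have hcomm :
      TensorProduct.map f g ∘ₗ TensorProduct.map LinearMap.id (⋀[ℂ]^p (Vc n)).subtype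
        = TensorProduct.map LinearMap.id (⋀[ℂ]^q (Vc n)).subtype
            ∘ₗ TensorProduct.map f (g.restrict hg) := by
    rw [← TensorProduct.map_comp, ← TensorProduct.map_comp, LinearMap.comp_id,
      LinearMap.id_comp, LinearMap.subtype_comp_restrict]
    rfl
  exact ⟨_, (LinearMap.congr_fun hcomm w).symm⟩

lemma mapsTo_onP (f : Module.End ℂ (P n)) (p : ℕ) : Set.MapsTo (onP n f) (Wp n p) (Wp n p) :=
  mapsTo_map f fun _ hx => hx

lemma mapsTo_extMul (i : Fin (2 * n + 1)) (p : ℕ) :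
    Set.MapsTo (extMul n i) (Wp n p) (Wp n (p + 1)) :=
  mapsTo_map LinearMap.id fun _ hx => ExteriorAlgebra.ι_mul_mem_exteriorPower _ hx

lemma mapsTo_intMul (i : Fin (2 * n + 1)) (p : ℕ) :
    Set.MapsTo (intMul n i) (Wp n (p + 1)) (Wp n p) :=
  mapsTo_map LinearMap.id fun _ hx => ExteriorAlgebra.contractLeft_mem_exteriorPower _ hx

lemma mapsTo_theta (t : ℝ) (k : Fin n) (p : ℕ) :
    Set.MapsTo (theta n t k) (Wp n p) (Wp n (p + 1)) := by
  intro v hv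
  -- `i(W)` cannot lower the degree of `v` when `p = 0`, so apply it after `e(τ^{k̄})`
  have hswap : E2 n k (Iw n v) = -Iw n (E2 n k v) :=
    LinearMap.congr_fun (extMul_mul_intMul_of_ne (idx2_ne_idxw k).symm) v
  simp only [theta, LinearMap.sub_apply, LinearMap.smul_apply, LinearMap.add_apply,
    LinearMap.comp_apply]
  refine sub_mem (Submodule.smul_mem _ _ (add_mem ?_ ?_)) (Submodule.smul_mem _ _ ?_)
  · exact mapsTo_extMul _ p (mapsTo_onP _ p hv)
  · exact mapsTo_extMul _ p (mapsTo_onP _ p hv)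
  · rw [hswap, map_neg]
    exact neg_mem (mapsTo_extMul _ p (mapsTo_intMul _ p (mapsTo_extMul _ p hv)))

lemma mapsTo_dOp (t : ℝ) (p : ℕ) : Set.MapsTo (dOp n t) (Wp n p) (Wp n (p + 1)) := by
  intro v hv
  simp only [dOp, LinearMap.sub_apply, LinearMap.smul_apply, LinearMap.sum_apply]
  exact sub_mem (Submodule.sum_mem _ fun k _ => mapsTo_theta t k p hv)
    (Submodule.smul_mem _ _ (mapsTo_extMul (idxw n) p hv))

theorem dOp_commutes_with_Udiag_general (n : ℕ) :
    (∀ t : ℝ, 0 < t → ∀ j : Fin n, dOp n t ∘ₗ Udiag n j = Udiag n j ∘ₗ dOp n t) ∧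
    (∀ t : ℝ, 0 < t → ∀ p : ℕ, p ≤ 2 * n → ∀ γ : Fin n → ℤ,
      ∀ v ∈ Vpγ n p γ, dOp n t v ∈ Vpγ n (p + 1) γ) := by
  refine ⟨fun t _ j => (commute_Udiag_dOp t j).eq.symm, fun t _ p _ γ v hv => ?_⟩
  rw [Vpγ, Submodule.mem_inf, Submodule.mem_iInf] at hv ⊢
  exact ⟨mapsTo_dOp t p hv.1,
    fun j => Module.End.mapsTo_genEigenspace_of_comm (commute_Udiag_dOp t j) _ _ (hv.2 j)⟩

/-- For every `t > 0` and every `j`, the operators `d(t)` and `U_{jj}` on `P_n ⊗ Λ` commute;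
consequently `d(t)` maps `V^{p,n,γ}` into `V^{p+1,n,γ}` for every `γ ∈ ℤ^n` and `0 ≤ p ≤ 2n`. -/
theorem dOp_commutes_with_Udiag (n : ℕ) (hn : 1 ≤ n) :
    (∀ t : ℝ, 0 < t → ∀ j : Fin n, dOp n t ∘ₗ Udiag n j = Udiag n j ∘ₗ dOp n t) ∧
    (∀ t : ℝ, 0 < t → ∀ p : ℕ, p ≤ 2 * n → ∀ γ : Fin n → ℤ,
      ∀ v ∈ Vpγ n p γ, dOp n t v ∈ Vpγ n (p + 1) γ) :=
  dOp_commutes_with_Udiag_general n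

end HeisenbergModel
end
end

section
/- For distinct indices j, k (with 2 ≤ j < k ≤ n in the last identity, and all indices between 1 and n), the symmetry operators satisfy: (1) χ_{jk}² = Id; (2) χ_{ij} ∘ χ_{ik} ∘ χ_{ij} = χ_{jk} for distinct i, j, k; (3) χ_{jk} ∘ U_{1j} = U_{1k} ∘ χ_{jk} for 2 ≤ j < k ≤ n; and (4) χ_{jk} ∘ d(t) = d(t) ∘ χ_{jk} for every real t > 0. -/
open scoped TensorProduct

noncomputable section

namespace HeisenbergModel

variable (n : ℕ)

/-- The permutation of the index set exchanging the indices of `τ^j, τ^k` and of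
`τ^{j̄}, τ^{k̄}`. -/
def swapPerm (j k : Fin n) : Equiv.Perm (Fin (2 * n + 1)) :=
  Equiv.swap (idx1 n j) (idx1 n k) * Equiv.swap (idx2 n j) (idx2 n k)

/-- The linear map of `V` exchanging `τ^j ↔ τ^k` and `τ^{j̄} ↔ τ^{k̄}` and fixing the other
distinguished basis vectors. -/
def chiV (j k : Fin n) : Vc n →ₗ[ℂ] Vc n := LinearMap.funLeft ℂ ℂ (swapPerm n j k)

/-- The symmetry operator `χ_{jk}` on `P_n ⊗ Λ`: the algebra automorphism of `P_n`
exchanging `x_j` and `x_k`, tensored with the algebra automorphism of `Λ` induced by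
the linear map `chiV` of `V`. -/
def chi (j k : Fin n) : PL n →ₗ[ℂ] PL n :=
  TensorProduct.map
    ((MvPolynomial.renameEquiv ℂ (Equiv.swap j k)).toAlgHom.toLinearMap)
    ((ExteriorAlgebra.map (chiV n j k)).toLinearMap)

/-!
`χ_{jk}` is the image of the transposition `(j k)` under a representation of the symmetric
group on `P_n ⊗ Λ`: renaming of variables tensored with the exterior-algebra map of the induced
permutation of the basis of `V`. Identities (1) and (2) are relations between transpositions.
For (3) and (4), the action of `σ` intertwines each of `a_m, a_m^*, e(τ^m), e(τ^{m̄}), i(Z_m),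
i(Z_{m̄})` with the same operator at index `σ m` and commutes with `e(τ^w), i(W)`; intertwining
survives sums, products and scalars, so `U_{ij}` goes to `U_{σi,σj}` and `d(t)` to itself after
reindexing the sum over `m`.
-/

section Indices

variable {n : ℕ}

lemma idx_cases (x : Fin (2 * n + 1)) :
    (∃ m, x = idx1 n m) ∨ (∃ m, x = idx2 n m) ∨ x = idxw n := by
  by_cases h₁ : x.1 < n
  · exact Or.inl ⟨⟨x.1, h₁⟩, rfl⟩
  by_cases h₂ : x.1 < 2 * n
  · exact Or.inr <| Or.inl ⟨⟨x.1 - n, by omega⟩, Fin.ext (by simp [idx2]; omega)⟩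
  · exact Or.inr <| Or.inr <| Fin.ext (by simp [idxw]; omega)

/-- The index map `τ^m ↦ τ^{σ m}`, `τ^{m̄} ↦ τ^{\overline{σ m}}`, `τ^w ↦ τ^w`. -/
def liftIdx (σ : Fin n → Fin n) (x : Fin (2 * n + 1)) : Fin (2 * n + 1) :=
  if h₁ : x.1 < n then idx1 n (σ ⟨x.1, h₁⟩)
  else if h₂ : x.1 < 2 * n then idx2 n (σ ⟨x.1 - n, by omega⟩)
  else idxw n

@[simp] lemma liftIdx_idx1 (σ : Fin n → Fin n) (m : Fin n) :
    liftIdx σ (idx1 n m) = idx1 n (σ m) := by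
  simp [liftIdx, idx1]

@[simp] lemma liftIdx_idx2 (σ : Fin n → Fin n) (m : Fin n) :
    liftIdx σ (idx2 n m) = idx2 n (σ m) := by
  have := m.isLt
  rw [liftIdx, dif_neg (by simp [idx2]), dif_pos (by simp [idx2]; omega)]
  congr
  simp [idx2]

@[simp] lemma liftIdx_idxw (σ : Fin n → Fin n) : liftIdx σ (idxw n) = idxw n := by
  rw [liftIdx, dif_neg (by simp [idxw]; omega), dif_neg (by simp [idxw])]

def liftPerm : Equiv.Perm (Fin n) →* Equiv.Perm (Fin (2 * n + 1)) where
  toFun σ :=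
    { toFun := liftIdx σ
      invFun := liftIdx σ.symm
      left_inv := fun x => by rcases idx_cases x with ⟨m, rfl⟩ | ⟨m, rfl⟩ | rfl <;> simp
      right_inv := fun x => by rcases idx_cases x with ⟨m, rfl⟩ | ⟨m, rfl⟩ | rfl <;> simp }
  map_one' := Equiv.ext fun x => by rcases idx_cases x with ⟨m, rfl⟩ | ⟨m, rfl⟩ | rfl <;> simp
  map_mul' σ τ := Equiv.ext fun x => by
    rcases idx_cases x with ⟨m, rfl⟩ | ⟨m, rfl⟩ | rfl <;> simp

lemma liftPerm_apply (σ : Equiv.Perm (Fin n)) (x : Fin (2 * n + 1)) :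
    liftPerm σ x = liftIdx σ x := rfl

lemma swapPerm_eq_liftPerm (j k : Fin n) : swapPerm n j k = liftPerm (Equiv.swap j k) := by
  ext x : 1
  have := j.isLt
  have := k.isLt
  rw [liftPerm_apply]
  rcases idx_cases x with ⟨m, rfl⟩ | ⟨m, rfl⟩ | rfl <;>
    simp only [swapPerm, Equiv.Perm.mul_apply, liftIdx_idx1, liftIdx_idx2, liftIdx_idxw,
      Equiv.swap_apply_def] <;>
    split_ifs <;> simp_all [Fin.ext_iff, idx1, idx2, idxw] <;> omega

end Indices

end HeisenbergModel

theorem SemiconjBy.finset_sum_right {ι R : Type*} [NonUnitalNonAssocSemiring R] (s : Finset ι)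
    {a : R} {f g : ι → R} (h : ∀ i ∈ s, SemiconjBy a (f i) (g i)) :
    SemiconjBy a (∑ i ∈ s, f i) (∑ i ∈ s, g i) := by
  simp only [SemiconjBy, Finset.mul_sum, Finset.sum_mul]
  exact Finset.sum_congr rfl h

theorem ExteriorAlgebra.map_contractLeft {R M N : Type*} [CommRing R] [AddCommGroup M]
    [Module R M] [AddCommGroup N] [Module R N] (φ : M →ₗ[R] N) (f : Module.Dual R N)
    (x : ExteriorAlgebra R M) :
    ExteriorAlgebra.map φ (CliffordAlgebra.contractLeft (Q := 0) (f ∘ₗ φ) x) =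
      CliffordAlgebra.contractLeft (Q := 0) f (ExteriorAlgebra.map φ x) := by
  induction x using CliffordAlgebra.left_induction with
  | algebraMap r => simp only [CliffordAlgebra.contractLeft_algebraMap, map_zero, AlgHom.commutes]
  | add x y hx hy => simp only [map_add, hx, hy]
  | ι_mul x m hx =>
    rw [CliffordAlgebra.contractLeft_ι_mul, map_sub, map_smul, map_mul,
      show CliffordAlgebra.ι (0 : QuadraticForm R M) m = ExteriorAlgebra.ι R m from rfl,
      ExteriorAlgebra.map_apply_ι, map_mul, ExteriorAlgebra.map_apply_ι,
      CliffordAlgebra.contractLeft_ι_mul, hx]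
    rfl

namespace HeisenbergModel

section Representation

variable {n : ℕ}

def permV (σ : Equiv.Perm (Fin n)) : Vc n →ₗ[ℂ] Vc n :=
  LinearMap.funLeft ℂ ℂ (liftPerm σ).symm

lemma permV_mul (σ τ : Equiv.Perm (Fin n)) : permV (σ * τ) = permV σ ∘ₗ permV τ := by
  ext v x
  simp only [permV, map_mul, LinearMap.comp_apply, LinearMap.funLeft_apply]
  rfl

lemma permV_tau (σ : Equiv.Perm (Fin n)) (x : Fin (2 * n + 1)) :
    permV σ (tau n x) = tau n (liftPerm σ x) := by
  ext y
  simp [permV, tau, LinearMap.funLeft_apply, Pi.single_apply, Equiv.symm_apply_eq]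

lemma dualf_comp_permV (σ : Equiv.Perm (Fin n)) (x : Fin (2 * n + 1)) :
    dualf n (liftPerm σ x) ∘ₗ permV σ = dualf n x := by
  ext v
  simp [permV, dualf, LinearMap.funLeft_apply]

def permRep : Equiv.Perm (Fin n) →* Module.End ℂ (PL n) where
  toFun σ := TensorProduct.map (MvPolynomial.rename σ).toLinearMap
    (ExteriorAlgebra.map (permV σ)).toLinearMap
  map_one' := by
    have hV : permV (1 : Equiv.Perm (Fin n)) = LinearMap.id := by
      ext v x
      simp only [permV, map_one]
      rfl
    simp only [Equiv.Perm.coe_one, MvPolynomial.rename_id, hV, ExteriorAlgebra.map_id]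
    exact TensorProduct.map_id
  map_mul' σ τ := by
    simp only [Equiv.Perm.coe_mul, ← MvPolynomial.rename_comp_rename, permV_mul,
      ← ExteriorAlgebra.map_comp_map, AlgHom.comp_toLinearMap, TensorProduct.map_comp,
      Module.End.mul_eq_comp]

lemma chi_eq_permRep (j k : Fin n) : chi n j k = permRep (Equiv.swap j k) := by
  rw [chi, chiV, swapPerm_eq_liftPerm, ← Equiv.swap_inv, map_inv]
  rfl

end Representation

section Equivariance

variable {n : ℕ} (σ : Equiv.Perm (Fin n))

lemma semiconjBy_permRep_onP {f f' : P n →ₗ[ℂ] P n}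
    (h : (MvPolynomial.rename σ).toLinearMap ∘ₗ f = f' ∘ₗ (MvPolynomial.rename σ).toLinearMap) :
    SemiconjBy (permRep σ) (onP n f) (onP n f') := by
  simp only [SemiconjBy, permRep, MonoidHom.coe_mk, OneHom.coe_mk, onP, LinearMap.rTensor,
    Module.End.mul_eq_comp, ← TensorProduct.map_comp, h, LinearMap.comp_id, LinearMap.id_comp]

lemma semiconjBy_permRep_onL {g g' : Lam n →ₗ[ℂ] Lam n}
    (h : (ExteriorAlgebra.map (permV σ)).toLinearMap ∘ₗ g =
      g' ∘ₗ (ExteriorAlgebra.map (permV σ)).toLinearMap) :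
    SemiconjBy (permRep σ) (onL n g) (onL n g') := by
  simp only [SemiconjBy, permRep, MonoidHom.coe_mk, OneHom.coe_mk, onL, LinearMap.lTensor,
    Module.End.mul_eq_comp, ← TensorProduct.map_comp, h, LinearMap.comp_id, LinearMap.id_comp]

lemma semiconjBy_permRep_A (m : Fin n) : SemiconjBy (permRep σ) (A n m) (A n (σ m)) :=
  semiconjBy_permRep_onP σ <| LinearMap.ext fun p =>
    (MvPolynomial.pderiv_rename σ.injective m p).symm

lemma semiconjBy_permRep_Astar (m : Fin n) :
    SemiconjBy (permRep σ) (Astar n m) (Astar n (σ m)) :=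
  semiconjBy_permRep_onP σ <| LinearMap.ext fun p => by
    simp [aStarOp, MvPolynomial.rename_X]

lemma semiconjBy_permRep_eMulV (x : Fin (2 * n + 1)) :
    SemiconjBy (permRep σ) (onL n (eMulV n (tau n x))) (onL n (eMulV n (tau n (liftPerm σ x)))) :=
  semiconjBy_permRep_onL σ <| LinearMap.ext fun a => by
    simp [eMulV, ExteriorAlgebra.map_apply_ι, permV_tau]

lemma semiconjBy_permRep_iMulF (x : Fin (2 * n + 1)) :
    SemiconjBy (permRep σ) (onL n (iMulF n (dualf n x)))
      (onL n (iMulF n (dualf n (liftPerm σ x)))) :=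
  semiconjBy_permRep_onL σ <| LinearMap.ext fun a => by
    have h := ExteriorAlgebra.map_contractLeft (permV σ) (dualf n (liftPerm σ x)) a
    rw [dualf_comp_permV] at h
    exact h

lemma semiconjBy_permRep_E1 (m : Fin n) : SemiconjBy (permRep σ) (E1 n m) (E1 n (σ m)) := by
  have h := semiconjBy_permRep_eMulV σ (idx1 n m)
  rwa [liftPerm_apply, liftIdx_idx1] at h

lemma semiconjBy_permRep_E2 (m : Fin n) : SemiconjBy (permRep σ) (E2 n m) (E2 n (σ m)) := by
  have h := semiconjBy_permRep_eMulV σ (idx2 n m)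
  rwa [liftPerm_apply, liftIdx_idx2] at h

lemma semiconjBy_permRep_I1 (m : Fin n) : SemiconjBy (permRep σ) (I1 n m) (I1 n (σ m)) := by
  have h := semiconjBy_permRep_iMulF σ (idx1 n m)
  rwa [liftPerm_apply, liftIdx_idx1] at h

lemma semiconjBy_permRep_I2 (m : Fin n) : SemiconjBy (permRep σ) (I2 n m) (I2 n (σ m)) := by
  have h := semiconjBy_permRep_iMulF σ (idx2 n m)
  rwa [liftPerm_apply, liftIdx_idx2] at h

lemma commute_permRep_Ew : Commute (permRep σ) (Ew n) := by
  have h := semiconjBy_permRep_eMulV σ (idxw n)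
  rwa [liftPerm_apply, liftIdx_idxw] at h

lemma commute_permRep_Iw : Commute (permRep σ) (Iw n) := by
  have h := semiconjBy_permRep_iMulF σ (idxw n)
  rwa [liftPerm_apply, liftIdx_idxw] at h

lemma semiconjBy_permRep_Uoff (i j : Fin n) :
    SemiconjBy (permRep σ) (Uoff n i j) (Uoff n (σ i) (σ j)) := by
  have h₁ := (semiconjBy_permRep_Astar σ i).mul_right (semiconjBy_permRep_A σ j)
  have h₂ := (semiconjBy_permRep_E1 σ j).mul_right (semiconjBy_permRep_I1 σ i)
  have h₃ := (semiconjBy_permRep_E2 σ i).mul_right (semiconjBy_permRep_I2 σ j)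
  exact (h₁.sub_right (R := Module.End ℂ (PL n)) h₂).add_right h₃

lemma semiconjBy_permRep_theta (t : ℝ) (m : Fin n) :
    SemiconjBy (permRep σ) (theta n t m) (theta n t (σ m)) := by
  have h₁ := (semiconjBy_permRep_E1 σ m).mul_right (semiconjBy_permRep_Astar σ m)
  have h₂ := (semiconjBy_permRep_E2 σ m).mul_right (semiconjBy_permRep_A σ m)
  have h₃ := (semiconjBy_permRep_E1 σ m).mul_right
    ((semiconjBy_permRep_E2 σ m).mul_right (commute_permRep_Iw σ))
  exact ((h₁.add_right h₂).smul_right _).sub_right (R := Module.End ℂ (PL n)) (h₃.smul_right _)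

lemma commute_permRep_dOp (t : ℝ) : Commute (permRep σ) (dOp n t) := by
  have hθ : SemiconjBy (permRep σ) (∑ m, theta n t m) (∑ m, theta n t (σ m)) :=
    SemiconjBy.finset_sum_right _ fun m _ => semiconjBy_permRep_theta σ t m
  rw [Equiv.sum_comp σ (theta n t)] at hθ
  exact hθ.sub_right (R := Module.End ℂ (PL n)) ((commute_permRep_Ew σ).smul_right _)

end Equivariance

/-- Basic properties of the symmetry operators: `χ_{jk}² = Id`;
`χ_{ij} χ_{ik} χ_{ij} = χ_{jk}` for distinct `i, j, k`; `χ_{jk} U_{1j} = U_{1k} χ_{jk}`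
for `2 ≤ j < k ≤ n`; and `χ_{jk}` commutes with `d(t)` for every `t > 0`. -/
theorem chi_properties (n : ℕ) (hn : 2 ≤ n) :
    (∀ j k : Fin n, j ≠ k → chi n j k ∘ₗ chi n j k = LinearMap.id) ∧
    (∀ i j k : Fin n, i ≠ j → i ≠ k → j ≠ k →
      chi n i j ∘ₗ chi n i k ∘ₗ chi n i j = chi n j k) ∧
    (∀ j k : Fin n, 1 ≤ (j : ℕ) → (j : ℕ) < (k : ℕ) →
      chi n j k ∘ₗ Uoff n ⟨0, by omega⟩ j = Uoff n ⟨0, by omega⟩ k ∘ₗ chi n j k) ∧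
    (∀ j k : Fin n, j ≠ k → ∀ t : ℝ, 0 < t →
      chi n j k ∘ₗ dOp n t = dOp n t ∘ₗ chi n j k) := by
  simp only [chi_eq_permRep, ← Module.End.mul_eq_comp, ← map_mul]
  refine ⟨fun j k _ => ?_, fun i j k _ hik hjk => ?_, fun j k hj hjk => ?_,
    fun j k _ t _ => (commute_permRep_dOp _ t).eq⟩
  · rw [Equiv.swap_mul_self, map_one]
    rfl
  · rw [← mul_assoc, ← Equiv.swap_comm k i, Equiv.swap_mul_swap_mul_swap hik.symm hjk.symm]
  · have h := (semiconjBy_permRep_Uoff (Equiv.swap j k) ⟨0, by omega⟩ j).eq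
    rwa [Equiv.swap_apply_left, Equiv.swap_apply_of_ne_of_ne (by simp [Fin.ext_iff]; omega)
      (by simp [Fin.ext_iff]; omega)] at h

end HeisenbergModel
end
end
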